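/- Let F_1,…,F_n : [0,∞) → ℝ be smooth functions with F_j'(r) + r F_j''(r) > 0 for all r ≥ 0 and all j, and let ψ(z) = ψ̃(|z_1|²,…,|z_n|²) be a smooth real-valued multi-radial function on ℂⁿ. Then for each j ∈ {1,…,n} the function z ↦ (∂ψ/∂z̄_j)(z) / (F_j'(|z_j|²) + |z_j|² F_j''(|z_j|²)) is holomorphic on ℂⁿ if and only if there exist real constants C_0, C_1, …, C_n such that ψ(z) = C_0 + Σ_{j=1}^n C_j |z_j|² F_j'(|z_j|²). In that case the gradient field equals Σ_j C_j z_j ∂/∂z_j, i.e. the displayed function equals C_j z_j for every j. -/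

import Mathlib

open Complex MeasureTheory Finset

noncomputable section

/-- The Wirtinger derivative `∂f/∂z̄ₖ` of a (real-differentiable) function
`f : ℂⁿ → ℂ`, namely `½(∂f/∂xₖ + i ∂f/∂yₖ)`. -/
def wirtZBar {n : ℕ} (f : (Fin n → ℂ) → ℂ) (k : Fin n) (z : Fin n → ℂ) : ℂ :=
  (1 / 2 : ℂ) *
    (fderiv ℝ f z (Pi.single k 1) + Complex.I * fderiv ℝ f z (Pi.single k Complex.I))

/-- The Wirtinger derivative `∂ψ/∂z̄ₖ` of a real-valued function. -/
def wirtZBarR {n : ℕ} (ψ : (Fin n → ℂ) → ℝ) (k : Fin n) (z : Fin n → ℂ) : ℂ :=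
  wirtZBar (fun w => (ψ w : ℂ)) k z

/-- The `j`-th component of the gradient field `(∂̄ψ)^♯` with respect to the
decoupled metric `hⱼₖ = δⱼₖ (Fⱼ' + rⱼ Fⱼ'')`, `rⱼ = |zⱼ|²`. -/
def decoupledGrad {n : ℕ} (F : Fin n → ℝ → ℝ) (ψ : (Fin n → ℂ) → ℝ)
    (j : Fin n) (z : Fin n → ℂ) : ℂ :=
  wirtZBarR ψ j z /
    (((deriv (F j) (Complex.normSq (z j)) +
        Complex.normSq (z j) * deriv (deriv (F j)) (Complex.normSq (z j)) : ℝ)) : ℂ)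

/-!
For multiradial `ψ = ψ̃(|z₁|², …, |zₙ|²)` one has `∂ψ/∂z̄ⱼ = (∂ⱼψ̃) zⱼ`, so the `j`-th gradient
component is `qⱼ zⱼ` with the real function `qⱼ = ∂ⱼψ̃ / (Fⱼ' + rⱼ Fⱼ'')`. If it is holomorphic,
then `qⱼ` is holomorphic and real-valued on the half-space `Re zⱼ > 0`, hence a constant `Cⱼ`.
So `ψ̃` and `Σ Cⱼ rⱼ Fⱼ'(rⱼ)` have the same gradient on the open orthant, differ there by a
constant, and by continuity also on the closed orthant. Conversely, for `ψ̃ = C₀ + Σ Cⱼ rⱼ Fⱼ'(rⱼ)`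
one computes `∂ⱼψ̃ = Cⱼ (Fⱼ' + rⱼ Fⱼ'')`, i.e. `qⱼ = Cⱼ`.
-/

def metricCoeff (f : ℝ → ℝ) (s : ℝ) : ℝ :=
  deriv f s + s * deriv (deriv f) s

def sqNorms {n : ℕ} (z : Fin n → ℂ) : Fin n → ℝ :=
  fun i => Complex.normSq (z i)

def modelPotential {n : ℕ} (F : Fin n → ℝ → ℝ) (C : Fin n → ℝ) (r : Fin n → ℝ) : ℝ :=
  ∑ k, C k * r k * deriv (F k) (r k)

section RealValuedHolomorphic

variable {E : Type*} [NormedAddCommGroup E] [NormedSpace ℂ E]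

/-- Cauchy–Riemann: `L` is real-valued because `g` is, and `L (I • v) = I * L v` is real too. -/
theorem HasFDerivAt.eq_zero_of_ofReal {g : E → ℝ} {L : E →L[ℂ] ℂ} {x : E}
    (h : HasFDerivAt (fun y => (g y : ℂ)) L x) : L = 0 := by
  have hR := h.restrictScalars ℝ
  have hg : HasFDerivAt g (reCLM.comp (L.restrictScalars ℝ)) x := reCLM.hasFDerivAt.comp x hR
  have hreal : ∀ v, ((L v).re : ℂ) = L v := fun v =>
    congrArg (fun M : E →L[ℝ] ℂ => M v) ((ofRealCLM.hasFDerivAt.comp x hg).unique hR)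
  ext v
  have h1 := congrArg im (hreal v)
  have h2 := congrArg im (hreal (I • v))
  simp only [ofReal_im, map_smul, smul_eq_mul, mul_im, I_re, I_im] at h1 h2
  apply Complex.ext <;> simp <;> linarith

theorem IsOpen.exists_eq_const_of_differentiableOn_ofReal {g : E → ℝ} {s : Set E}
    (hs : IsOpen s) (hs' : IsPreconnected s) (hg : DifferentiableOn ℂ (fun y => (g y : ℂ)) s) :
    ∃ c, ∀ x ∈ s, g x = c := by
  obtain ⟨c, hc⟩ := hs.exists_is_const_of_fderiv_eq_zero hs' hg fun x hx =>
    ((hg x hx).differentiableAt (hs.mem_nhds hx)).hasFDerivAt.eq_zero_of_ofReal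
  exact ⟨c.re, fun x hx => by simpa using congrArg re (hc x hx)⟩

end RealValuedHolomorphic

section Multiradial

variable {n : ℕ}

theorem hasFDerivAt_sqNorms (z : Fin n → ℂ) :
    HasFDerivAt sqNorms
      (ContinuousLinearMap.pi fun i => (2 • innerSL ℝ (z i)).comp (ContinuousLinearMap.proj i)) z := by
  refine hasFDerivAt_pi'.2 fun i => ?_
  simp only [sqNorms, Complex.normSq_eq_norm_sq]
  exact (hasFDerivAt_apply i z).norm_sq

theorem fderiv_comp_sqNorms_single {ψt : (Fin n → ℝ) → ℝ} {z : Fin n → ℂ}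
    (hψt : DifferentiableAt ℝ ψt (sqNorms z)) (j : Fin n) (v : ℂ) :
    fderiv ℝ (fun w => (ψt (sqNorms w) : ℂ)) z (Pi.single j v) =
      ((2 * inner ℝ (z j) v * fderiv ℝ ψt (sqNorms z) (Pi.single j 1) : ℝ) : ℂ) := by
  have H : HasFDerivAt (fun w => (ψt (sqNorms w) : ℂ)) _ z :=
    (ofRealCLM.hasFDerivAt.comp _ hψt.hasFDerivAt).comp z (hasFDerivAt_sqNorms z)
  rw [H.fderiv]
  have hsingle : (ContinuousLinearMap.pi fun i =>
      (2 • innerSL ℝ (z i)).comp (ContinuousLinearMap.proj i)) (Pi.single j v) =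
      (2 * inner ℝ (z j) v) • (Pi.single j 1 : Fin n → ℝ) := by
    ext i
    by_cases hij : i = j
    · subst hij; simp; ring
    · simp [hij]
  rw [ContinuousLinearMap.comp_apply, hsingle, ContinuousLinearMap.comp_apply, map_smul,
    ofRealCLM_apply, smul_eq_mul, mul_assoc]

theorem wirtZBarR_comp_sqNorms {ψt : (Fin n → ℝ) → ℝ} {z : Fin n → ℂ}
    (hψt : DifferentiableAt ℝ ψt (sqNorms z)) (j : Fin n) :
    wirtZBarR (fun w => ψt (sqNorms w)) j z =
      (fderiv ℝ ψt (sqNorms z) (Pi.single j 1) : ℂ) * z j := by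
  rw [wirtZBarR, wirtZBar, fderiv_comp_sqNorms_single hψt, fderiv_comp_sqNorms_single hψt]
  apply Complex.ext <;> simp <;> ring

theorem decoupledGrad_eq_of_multiradial {F : Fin n → ℝ → ℝ} {ψ : (Fin n → ℂ) → ℝ}
    {ψt : (Fin n → ℝ) → ℝ} (hψ : ∀ z, ψ z = ψt (sqNorms z)) {z : Fin n → ℂ}
    (hψt : DifferentiableAt ℝ ψt (sqNorms z)) (j : Fin n) :
    decoupledGrad F ψ j z =
      ((fderiv ℝ ψt (sqNorms z) (Pi.single j 1) / metricCoeff (F j) (sqNorms z j) : ℝ) : ℂ) *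
        z j := by
  rw [decoupledGrad, funext hψ, wirtZBarR_comp_sqNorms hψt, metricCoeff, sqNorms]
  push_cast
  ring

end Multiradial

section ModelPotential

theorem hasDerivAt_mul_deriv {f : ℝ → ℝ} {s : ℝ} (hf : DifferentiableAt ℝ (deriv f) s) :
    HasDerivAt (fun t => t * deriv f t) (metricCoeff f s) s :=
  ((hasDerivAt_id' s).mul hf.hasDerivAt).congr_deriv (by rw [metricCoeff, one_mul])

variable {n : ℕ} {F : Fin n → ℝ → ℝ}

theorem hasFDerivAt_modelPotential (C : Fin n → ℝ) {r : Fin n → ℝ}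
    (hF : ∀ k, DifferentiableAt ℝ (deriv (F k)) (r k)) :
    HasFDerivAt (modelPotential F C)
      (∑ k, (C k * metricCoeff (F k) (r k)) •
        (ContinuousLinearMap.proj k : (Fin n → ℝ) →L[ℝ] ℝ)) r := by
  unfold modelPotential
  refine HasFDerivAt.fun_sum fun k _ => ?_
  have h := ((hasDerivAt_mul_deriv (hF k)).const_mul (C k)).comp_hasFDerivAt
    r (ContinuousLinearMap.proj k : (Fin n → ℝ) →L[ℝ] ℝ).hasFDerivAt
  simpa only [Function.comp_def, ContinuousLinearMap.proj_apply, mul_assoc] using h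

theorem decoupledGrad_eq_of_eq_modelPotential (hF : ∀ k, Differentiable ℝ (deriv (F k)))
    {ψ : (Fin n → ℂ) → ℝ} {C₀ : ℝ} {C : Fin n → ℝ}
    (hψ : ∀ z, ψ z = C₀ + modelPotential F C (sqNorms z)) {j : Fin n} {z : Fin n → ℂ}
    (hD : metricCoeff (F j) (normSq (z j)) ≠ 0) :
    decoupledGrad F ψ j z = C j * z j := by
  have H := (hasFDerivAt_modelPotential C fun k => hF k (sqNorms z k)).const_add C₀
  rw [decoupledGrad_eq_of_multiradial (ψt := fun r => C₀ + modelPotential F C r) hψ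
    H.differentiableAt, H.fderiv]
  simp [sqNorms, Pi.single_apply, hD]

end ModelPotential

section Rigidity

variable {n : ℕ}

theorem exists_const_of_differentiable_eq_ofReal_mul_apply {h : (Fin n → ℂ) → ℂ}
    {q : (Fin n → ℂ) → ℝ} {j : Fin n} (hh : Differentiable ℂ h) (hq : ∀ z, h z = q z * z j) :
    ∃ c, ∀ z, 0 < (z j).re → q z = c := by
  let s : Set (Fin n → ℂ) := {z | 0 < (z j).re}
  have hs : IsOpen s := isOpen_lt continuous_const (continuous_re.comp (continuous_apply j))
  have hs' : Convex ℝ s :=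
    (convex_halfSpace_re_gt 0).linear_preimage (LinearMap.proj j : (Fin n → ℂ) →ₗ[ℝ] ℂ)
  have hne : ∀ z ∈ s, z j ≠ 0 := fun z hz h0 => by simp [s, h0] at hz
  have hdiff : DifferentiableOn ℂ (fun z => (q z : ℂ)) s :=
    (hh.differentiableOn.mul ((differentiable_apply (𝕜 := ℂ) j).differentiableOn.inv hne)).congr
      fun z hz => by simp only [Pi.mul_apply, Pi.inv_apply, hq, mul_inv_cancel_right₀ (hne z hz)]
  exact hs.exists_eq_const_of_differentiableOn_ofReal hs'.isPreconnected hdiff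

theorem ContinuousLinearMap.ext_pi_single_one {L L' : (Fin n → ℝ) →L[ℝ] ℝ}
    (h : ∀ j, L (Pi.single j 1) = L' (Pi.single j 1)) : L = L' :=
  ContinuousLinearMap.coe_injective <| (Pi.basisFun ℝ (Fin n)).ext fun j => by simpa using h j

variable {F : Fin n → ℝ → ℝ}

theorem exists_eq_const_add_modelPotential {ψt : (Fin n → ℝ) → ℝ} (hψt : Differentiable ℝ ψt)
    (hF : ∀ k, Differentiable ℝ (deriv (F k))) (C : Fin n → ℝ)
    (hpartial : ∀ r : Fin n → ℝ, (∀ i, 0 < r i) → ∀ j,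
      fderiv ℝ ψt r (Pi.single j 1) = C j * metricCoeff (F j) (r j)) :
    ∃ C₀, ∀ r : Fin n → ℝ, (∀ i, 0 ≤ r i) → ψt r = C₀ + modelPotential F C r := by
  have hmodel r := hasFDerivAt_modelPotential (F := F) C (r := r) fun k => hF k (r k)
  have hmodel' : Differentiable ℝ (modelPotential F C) := fun r => (hmodel r).differentiableAt
  let s : Set (Fin n → ℝ) := Set.univ.pi fun _ => Set.Ioi 0
  have hs : IsOpen s := isOpen_set_pi Set.finite_univ fun _ _ => isOpen_Ioi
  have hs' : Convex ℝ s := convex_pi fun _ _ => convex_Ioi 0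
  obtain ⟨C₀, hC₀⟩ := hs.exists_eq_add_of_fderiv_eq hs'.isPreconnected hψt.differentiableOn
    hmodel'.differentiableOn fun r hr => by
      refine ContinuousLinearMap.ext_pi_single_one fun j => ?_
      rw [(hmodel r).fderiv, hpartial r (by simpa [s] using hr)]
      simp [Pi.single_apply]
  have hclosure := hC₀.closure hψt.continuous (hmodel'.continuous.add continuous_const)
  rw [closure_pi_set, funext fun _ => closure_Ioi (0 : ℝ)] at hclosure
  exact ⟨C₀, fun r hr => (hclosure fun i _ => hr i).trans (add_comm _ _)⟩

theorem exists_eq_modelPotential_of_differentiable_decoupledGrad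
    (hF : ∀ k, Differentiable ℝ (deriv (F k)))
    (hFpos : ∀ j, ∀ r : ℝ, 0 ≤ r → 0 < metricCoeff (F j) r)
    {ψt : (Fin n → ℝ) → ℝ} (hψt : Differentiable ℝ ψt) {ψ : (Fin n → ℂ) → ℝ}
    (hψ : ∀ z, ψ z = ψt (sqNorms z)) (hhol : ∀ j, Differentiable ℂ (decoupledGrad F ψ j)) :
    ∃ C₀ C, ∀ z, ψ z = C₀ + modelPotential F C (sqNorms z) := by
  choose C hC using fun j => exists_const_of_differentiable_eq_ofReal_mul_apply (hhol j)
    fun z => decoupledGrad_eq_of_multiradial hψ (hψt _) j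
  obtain ⟨C₀, hC₀⟩ := exists_eq_const_add_modelPotential hψt hF C fun r hr j => by
    have hsq : sqNorms (fun i => (√(r i) : ℂ)) = r :=
      funext fun i => by simp [sqNorms, Real.mul_self_sqrt (hr i).le]
    have hCj := hC j (fun i => (√(r i) : ℂ)) (by simpa using hr j)
    rwa [hsq, div_eq_iff (hFpos j _ (hr j).le).ne'] at hCj
  exact ⟨C₀, C, fun z => (hψ z).trans (hC₀ _ fun i => normSq_nonneg _)⟩

end Rigidity

theorem stmt7 (n : ℕ) (F : Fin n → ℝ → ℝ)
    (hF : ∀ j, ContDiff ℝ (⊤ : ℕ∞) (F j))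
    (hFpos : ∀ j, ∀ r : ℝ, 0 ≤ r → 0 < deriv (F j) r + r * deriv (deriv (F j)) r)
    (ψt : (Fin n → ℝ) → ℝ) (hψt : ContDiff ℝ (⊤ : ℕ∞) ψt)
    (ψ : (Fin n → ℂ) → ℝ)
    (hψ : ∀ z : Fin n → ℂ, ψ z = ψt (fun i => Complex.normSq (z i))) :
    ((∀ j : Fin n, Differentiable ℂ (decoupledGrad F ψ j)) ↔
      ∃ C₀ : ℝ, ∃ C : Fin n → ℝ,
        ∀ z : Fin n → ℂ,
          ψ z = C₀ + ∑ j, C j * Complex.normSq (z j) *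
            deriv (F j) (Complex.normSq (z j))) ∧
    (∀ C₀ : ℝ, ∀ C : Fin n → ℝ,
      (∀ z : Fin n → ℂ,
        ψ z = C₀ + ∑ j, C j * Complex.normSq (z j) *
          deriv (F j) (Complex.normSq (z j))) →
      ∀ j : Fin n, ∀ z : Fin n → ℂ,
        decoupledGrad F ψ j z = ((C j : ℝ) : ℂ) * z j) := by
  have hF' : ∀ j, Differentiable ℝ (deriv (F j)) := fun j =>
    ((contDiff_infty_iff_deriv.mp (hF j)).2).differentiable (by simp)
  have hgrad : ∀ (C₀ : ℝ) (C : Fin n → ℝ),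
      (∀ z, ψ z = C₀ + modelPotential F C (sqNorms z)) →
      ∀ j z, decoupledGrad F ψ j z = C j * z j := fun _ _ hC j z =>
    decoupledGrad_eq_of_eq_modelPotential hF' hC (hFpos j _ (normSq_nonneg _)).ne'
  refine ⟨⟨exists_eq_modelPotential_of_differentiable_decoupledGrad hF' hFpos
    (hψt.differentiable (by simp)) hψ, ?_⟩, hgrad⟩
  rintro ⟨C₀, C, hC⟩ j
  rw [funext (hgrad C₀ C hC j)]
  exact (differentiable_apply j).const_mul _
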